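/- Every binary word of length 10 encounters the pattern xxx up to ≃, and there exists a binary word of length 9 that avoids xxx up to ≃; that is, the longest binary word avoiding xxx up to ≃ has length 9. -/

import Mathlib

/-- `x` is a (finite, contiguous) factor of the infinite word `w`. -/
def InfFactor {A : Type*} (x : List A) (w : ℕ → A) : Prop :=
  ∃ i : ℕ, x = (List.range x.length).map fun j => w (i + j)

/-- Reversal-equivalence of words: `x ≃ x'` iff `x' = x` or `x'` is the reversal of `x`. -/
def SimRev {A : Type*} (x x' : List A) : Prop := x' = x ∨ x' = x.reverse

/-- The infinite word `w` encounters the pattern `p` up to the relation `sim`: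
`w` has a factor `X₁X₂⋯Xₙ` with each `Xᵢ` nonempty and `sim Xᵢ Xⱼ` whenever `pᵢ = pⱼ`. -/
def Encounters {V A : Type*} (sim : List A → List A → Prop) (p : List V) (w : ℕ → A) : Prop :=
  ∃ X : List (List A), X.length = p.length ∧ (∀ x ∈ X, x ≠ []) ∧
    InfFactor X.flatten w ∧
    ∀ i j : ℕ, i < p.length → j < p.length → p[i]? = p[j]? →
      sim (X.getD i []) (X.getD j [])

/-- The finite word `w` encounters the pattern `p` up to the relation `sim`. -/
def EncountersF {V A : Type*} (sim : List A → List A → Prop) (p : List V) (w : List A) : Prop :=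
  ∃ X : List (List A), X.length = p.length ∧ (∀ x ∈ X, x ≠ []) ∧
    X.flatten <:+: w ∧
    ∀ i j : ℕ, i < p.length → j < p.length → p[i]? = p[j]? →
      sim (X.getD i []) (X.getD j [])

/-!
Both halves are finite checks. An occurrence of `xxx` up to `≃` is a factor `X₁X₂X₃` with
`X₂ ≃ X₁` and `X₃ ≃ X₁` (`≃` is an equivalence), and then all three blocks have a common length
`n`; so it is determined by its starting position `i` and `n`, which turns the encounter
condition into a decidable one. The kernel then checks it on all `2¹⁰` binary words of length
10, and refutes it on the witness `001101100`.
-/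

section

variable {A : Type*}

theorem simRev_equivalence : Equivalence (SimRev (A := A)) where
  refl _ := Or.inl rfl
  symm := by rintro x y (rfl | rfl) <;> simp [SimRev]
  trans := by rintro x y z (rfl | rfl) (rfl | rfl) <;> simp [SimRev]

theorem SimRev.length_eq {x x' : List A} (h : SimRev x x') : x'.length = x.length := by
  rcases h with rfl | rfl <;> simp

instance [DecidableEq A] : DecidableRel (SimRev (A := A)) :=
  fun _ _ => inferInstanceAs (Decidable (_ ∨ _))

theorem encountersF_replicate_three_iff {sim : List A → List A → Prop}
    (hsim : Equivalence sim) (w : List A) :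
    EncountersF sim (List.replicate 3 ()) w ↔
      ∃ a b c : List A, a ≠ [] ∧ b ≠ [] ∧ c ≠ [] ∧ sim a b ∧ sim a c ∧ a ++ b ++ c <:+: w := by
  constructor
  · rintro ⟨X, hlen, hne, hinf, hX⟩
    obtain ⟨a, b, c, rfl⟩ := List.length_eq_three.mp (hlen.trans List.length_replicate)
    refine ⟨a, b, c, hne a (by simp), hne b (by simp), hne c (by simp),
      hX 0 1 (by simp) (by simp) (by simp), hX 0 2 (by simp) (by simp) (by simp), ?_⟩
    simpa using hinf
  · rintro ⟨a, b, c, ha, hb, hc, hab, hac, hinf⟩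
    have hrel : ∀ x ∈ [a, b, c], sim a x := by
      simp only [List.mem_cons, List.not_mem_nil, or_false]
      rintro x (rfl | rfl | rfl)
      exacts [hsim.refl x, hab, hac]
    have hmem : ∀ i < 3, [a, b, c].getD i [] ∈ [a, b, c] := fun i hi => by
      rw [List.getD_eq_getElem _ _ (by simpa using hi)]
      exact List.getElem_mem _
    refine ⟨[a, b, c], by simp, by simp [ha, hb, hc], by simpa using hinf, fun i j hi hj _ => ?_⟩
    rw [List.length_replicate] at hi hj
    exact hsim.trans (hsim.symm (hrel _ (hmem i hi))) (hrel _ (hmem j hj))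

def factorAt (w : List A) (i n : ℕ) : List A := (w.drop i).take n

theorem length_factorAt {w : List A} {i n : ℕ} (h : i + n ≤ w.length) :
    (factorAt w i n).length = n := by
  simp only [factorAt, List.length_take, List.length_drop]
  omega

theorem factorAt_isInfix (w : List A) (i n : ℕ) : factorAt w i n <:+: w :=
  (List.take_prefix n _).isInfix.trans (List.drop_suffix i w).isInfix

theorem factorAt_add (w : List A) (i m n : ℕ) :
    factorAt w i (m + n) = factorAt w i m ++ factorAt w (i + m) n := by
  simp [factorAt, List.take_add, List.drop_drop]

theorem factorAt_eq_of_append_append {s u t w : List A} {i n : ℕ} (hw : s ++ u ++ t = w)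
    (hi : i = s.length) (hn : n = u.length) : factorAt w i n = u := by
  subst hw hi hn
  simp [factorAt]

def IsCubeUpToRevAt (w : List A) (i n : ℕ) : Prop :=
  0 < n ∧ i + 3 * n ≤ w.length ∧
    SimRev (factorAt w i n) (factorAt w (i + n) n) ∧
    SimRev (factorAt w i n) (factorAt w (i + 2 * n) n)

instance [DecidableEq A] (w : List A) (i n : ℕ) : Decidable (IsCubeUpToRevAt w i n) :=
  inferInstanceAs (Decidable (_ ∧ _))

theorem exists_isCubeUpToRevAt_of_infix {w a b c : List A} (ha : a ≠ [])
    (hab : SimRev a b) (hac : SimRev a c) (h : a ++ b ++ c <:+: w) :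
    ∃ i ≤ w.length, ∃ n ≤ w.length, IsCubeUpToRevAt w i n := by
  obtain ⟨s, t, hw⟩ := h
  have hb := hab.length_eq
  have hc := hac.length_eq
  have fa : factorAt w s.length a.length = a :=
    factorAt_eq_of_append_append (t := b ++ c ++ t) (by rw [← hw]; simp) rfl rfl
  have fb : factorAt w (s.length + a.length) a.length = b :=
    factorAt_eq_of_append_append (s := s ++ a) (t := c ++ t) (by rw [← hw]; simp) (by simp)
      hb.symm
  have fc : factorAt w (s.length + 2 * a.length) a.length = c :=
    factorAt_eq_of_append_append (s := s ++ a ++ b) (t := t) (by rw [← hw]; simp)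
      (by simp only [List.length_append]; omega) hc.symm
  have hlen : w.length = s.length + 3 * a.length + t.length := by
    rw [← hw]; simp only [List.length_append]; omega
  refine ⟨s.length, by omega, a.length, by omega, List.length_pos_iff.mpr ha, by omega, ?_, ?_⟩
  · rwa [fa, fb]
  · rwa [fa, fc]

theorem IsCubeUpToRevAt.exists_infix {w : List A} {i n : ℕ} (h : IsCubeUpToRevAt w i n) :
    ∃ a b c : List A, a ≠ [] ∧ b ≠ [] ∧ c ≠ [] ∧
      SimRev a b ∧ SimRev a c ∧ a ++ b ++ c <:+: w := by
  obtain ⟨hn, hlen, hab, hac⟩ := h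
  have hne : ∀ j, j + n ≤ w.length → factorAt w j n ≠ [] := fun j hj =>
    List.ne_nil_of_length_pos (by rw [length_factorAt hj]; exact hn)
  refine ⟨_, _, _, hne i (by omega), hne (i + n) (by omega), hne (i + 2 * n) (by omega),
    hab, hac, ?_⟩
  rw [← factorAt_add, show i + 2 * n = i + (n + n) by ring, ← factorAt_add]
  exact factorAt_isInfix w i _

theorem encountersF_cube_simRev_iff (w : List A) :
    EncountersF SimRev (List.replicate 3 ()) w ↔
      ∃ i ≤ w.length, ∃ n ≤ w.length, IsCubeUpToRevAt w i n := by
  rw [encountersF_replicate_three_iff simRev_equivalence]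
  constructor
  · rintro ⟨a, b, c, ha, -, -, hab, hac, h⟩
    exact exists_isCubeUpToRevAt_of_infix ha hab hac h
  · rintro ⟨i, -, n, -, h⟩
    exact h.exists_infix

theorem mem_sections_replicate_length {s w : List A} (h : ∀ a ∈ w, a ∈ s) :
    w ∈ (List.replicate w.length s).sections := by
  rw [List.mem_sections]
  induction w with
  | nil => exact List.Forall₂.nil
  | cons a w ih =>
    simp only [List.mem_cons, forall_eq_or_imp] at h
    exact List.Forall₂.cons h.1 (ih h.2)

end

set_option maxRecDepth 10000 in
theorem binary_sections_ten_isCubeUpToRevAt :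
    ∀ w ∈ (List.replicate 10 [(0 : Fin 2), 1]).sections,
      ∃ i ≤ w.length, ∃ n ≤ w.length, IsCubeUpToRevAt w i n := by
  decide

theorem longest_binary_avoiding_cube_upto_rev :
    (∀ w : List (Fin 2), w.length = 10 → EncountersF SimRev (List.replicate 3 ()) w) ∧
    (∃ w : List (Fin 2), w.length = 9 ∧ ¬ EncountersF SimRev (List.replicate 3 ()) w) := by
  simp only [encountersF_cube_simRev_iff]
  refine ⟨fun w hw => ?_, [0, 0, 1, 1, 0, 1, 1, 0, 0], rfl, by decide⟩
  apply binary_sections_ten_isCubeUpToRevAt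
  rw [← hw]
  exact mem_sections_replicate_length fun a _ => by fin_cases a <;> simp
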